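/- arXiv:math/0701333 — 4 statements merged into one kernel-verified Lean document; each statement's English description precedes it below -/
import Mathlib

section
/- The partial derivatives ∂W/∂x = y² + (2N+1)x^{2N} and ∂W/∂y = 2xy form a regular sequence in ℚ[x,y]. -/
/-! Regard `ℚ[x,y]` as `(ℚ[x])[y]`. There `Wx` is the monic quadratic `y² + (2N+1)x^{2N}`,
which is irreducible because `-(2N+1)x^{2N}` is not a square (evaluate at `x = 1`); as
`ℚ[x][y]` is a UFD, `Wx` is prime. So `ℚ[x,y]/(Wx)` is a domain, and `Wy = 2xy` is nonzero
there because its `y`-degree is `1 < 2`. -/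

open MvPolynomial

/-- `∂W/∂x = y² + (2N+1) x^{2N}`. -/
noncomputable def Wx (N : ℕ) : MvPolynomial (Fin 2) ℚ :=
  X 1 ^ 2 + C ((2 * N + 1 : ℕ) : ℚ) * X 0 ^ (2 * N)

/-- `∂W/∂y = 2 x y`. -/
noncomputable def Wy (N : ℕ) : MvPolynomial (Fin 2) ℚ :=
  C 2 * X 0 * X 1

theorem Polynomial.irreducible_X_sq_add_C {R : Type*} [CommRing R] [IsDomain R] {a : R}
    (h : ∀ r : R, r ^ 2 + a ≠ 0) : Irreducible (Polynomial.X ^ 2 + Polynomial.C a) := by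
  have hmonic := Polynomial.monic_X_pow_add_C a two_ne_zero
  have hdeg : (Polynomial.X ^ 2 + Polynomial.C a).natDegree = 2 :=
    Polynomial.natDegree_X_pow_add_C
  rw [hmonic.irreducible_iff_roots_eq_zero_of_degree_le_three hdeg.ge (by omega)]
  refine Multiset.eq_zero_of_forall_notMem fun r hr => h r ?_
  simpa using (Polynomial.mem_roots hmonic.ne_zero).mp hr

theorem MvPolynomial.sq_add_C_mul_X_pow_ne_zero {σ R : Type*} [CommRing R] [LinearOrder R]
    [IsStrictOrderedRing R] (r : MvPolynomial σ R) {c : R} (hc : 0 < c) (i : σ) (n : ℕ) :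
    r ^ 2 + C c * X i ^ n ≠ 0 := by
  intro h
  have hev := congrArg (eval fun _ => (1 : R)) h
  simp only [map_add, map_pow, map_mul, eval_C, eval_X, one_pow, mul_one, map_zero] at hev
  exact (by positivity : 0 < eval (fun _ => 1) r ^ 2 + c).ne' hev

theorem Prime.eq_zero_of_mk_mul_eq_zero {R : Type*} [CommRing R] {p b : R} (hp : Prime p)
    (hb : ¬ p ∣ b) {q : R ⧸ Ideal.span {p}}
    (h : Ideal.Quotient.mk (Ideal.span {p}) b * q = 0) : q = 0 := by
  obtain ⟨q, rfl⟩ := Ideal.Quotient.mk_surjective q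
  rw [← map_mul, Ideal.Quotient.eq_zero_iff_mem, Ideal.mem_span_singleton] at h
  rw [Ideal.Quotient.eq_zero_iff_mem, Ideal.mem_span_singleton]
  exact (hp.dvd_or_dvd h).resolve_left hb

section yPolyEquiv

variable {R : Type*} [CommRing R]

/-- `R[x,y] ≃ (R[x])[y]`, with `x = X 0` and `y = X 1`. -/
noncomputable def yPolyEquiv : MvPolynomial (Fin 2) R ≃ₐ[R] Polynomial (MvPolynomial (Fin 1) R) :=
  (renameEquiv R (Equiv.swap 0 1)).trans (finSuccEquiv R 1)

theorem yPolyEquiv_X_zero : yPolyEquiv (X 0 : MvPolynomial (Fin 2) R) = Polynomial.C (X 0) := by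
  simpa [yPolyEquiv] using finSuccEquiv_X_succ (R := R) (j := (0 : Fin 1))

theorem yPolyEquiv_X_one : yPolyEquiv (X 1 : MvPolynomial (Fin 2) R) = Polynomial.X := by
  simpa [yPolyEquiv] using finSuccEquiv_X_zero (R := R) (n := 1)

theorem yPolyEquiv_C (r : R) : yPolyEquiv (C r : MvPolynomial (Fin 2) R) = Polynomial.C (C r) :=
  yPolyEquiv.commutes r

end yPolyEquiv

theorem yPolyEquiv_Wx (N : ℕ) : yPolyEquiv (Wx N) =
    Polynomial.X ^ 2 + Polynomial.C (C ((2 * N + 1 : ℕ) : ℚ) * X 0 ^ (2 * N)) := by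
  simp [Wx, yPolyEquiv_X_zero, yPolyEquiv_X_one, yPolyEquiv_C]

theorem yPolyEquiv_Wy (N : ℕ) : yPolyEquiv (Wy N) = Polynomial.C (C 2 * X 0) * Polynomial.X := by
  simp [Wy, yPolyEquiv_X_zero, yPolyEquiv_X_one, yPolyEquiv_C]

theorem prime_Wx (N : ℕ) : Prime (Wx N) := by
  rw [← MulEquiv.prime_iff yPolyEquiv, yPolyEquiv_Wx]
  refine (Polynomial.irreducible_X_sq_add_C fun r => ?_).prime
  exact sq_add_C_mul_X_pow_ne_zero r (by positivity) 0 (2 * N)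

theorem not_Wx_dvd_Wy (N : ℕ) : ¬ Wx N ∣ Wy N := by
  intro h
  refine Polynomial.not_dvd_of_natDegree_lt ?_ ?_ (map_dvd yPolyEquiv h)
  · simp [yPolyEquiv_Wy, X_ne_zero]
  · rw [yPolyEquiv_Wy, yPolyEquiv_Wx, Polynomial.natDegree_X_pow_add_C,
      Polynomial.natDegree_C_mul_X _ (by simp [X_ne_zero])]
    exact one_lt_two

theorem partials_regular_sequence_general (N : ℕ) :
    (∀ p : MvPolynomial (Fin 2) ℚ, Wx N * p = 0 → p = 0) ∧
    (∀ q : MvPolynomial (Fin 2) ℚ ⧸ Ideal.span {Wx N},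
      Ideal.Quotient.mk (Ideal.span {Wx N}) (Wy N) * q = 0 → q = 0) :=
  ⟨fun _ hp => (mul_eq_zero.mp hp).resolve_left (prime_Wx N).ne_zero,
    fun _ hq => (prime_Wx N).eq_zero_of_mk_mul_eq_zero (not_Wx_dvd_Wy N) hq⟩

/-- The partial derivatives `∂W/∂x = y² + (2N+1)x^{2N}` and `∂W/∂y = 2xy` form
a regular sequence in `ℚ[x,y]`: the first is a nonzerodivisor, and the second is
a nonzerodivisor in the quotient by the ideal generated by the first. -/
theorem partials_regular_sequence (N : ℕ) (hN : 1 ≤ N) :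
    (∀ p : MvPolynomial (Fin 2) ℚ, Wx N * p = 0 → p = 0) ∧
    (∀ q : MvPolynomial (Fin 2) ℚ ⧸ Ideal.span {Wx N},
      Ideal.Quotient.mk (Ideal.span {Wx N}) (Wy N) * q = 0 → q = 0) :=
  partials_regular_sequence_general N
end

section
/- The polynomials 2xy and y² + w'(x), where w'(x) = (2N+1)x^{2N}, form a regular sequence in ℚ[x,y]. -/
open MvPolynomial

/-! In a UFD, `g` is a nonzerodivisor modulo `a` as soon as `a` and `g` are coprime. Here `2xy`
is a unit times the product of the primes `x` and `y`, and neither divides `g = y² + (2N+1)x^{2N}`: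
`g` has the monomial `y²`, free of `x`, and the monomial `x^{2N}`, free of `y`. -/

theorem IsRelPrime.eq_zero_of_quotient_mk_mul_eq_zero {R : Type*} [CommRing R]
    [DecompositionMonoid R] {a g : R} (h : IsRelPrime a g) {q : R ⧸ Ideal.span {a}}
    (hq : Ideal.Quotient.mk _ g * q = 0) : q = 0 := by
  obtain ⟨f, rfl⟩ := Ideal.Quotient.mk_surjective q
  rw [← map_mul, Ideal.Quotient.eq_zero_iff_mem, Ideal.mem_span_singleton] at hq
  rw [Ideal.Quotient.eq_zero_iff_mem, Ideal.mem_span_singleton]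
  exact h.dvd_of_dvd_mul_left hq

namespace MvPolynomial

variable {σ R : Type*}

theorem coeff_eq_zero_of_X_dvd [CommSemiring R] {i : σ} {p : MvPolynomial σ R}
    (h : X i ∣ p) {m : σ →₀ ℕ} (hm : m i = 0) : coeff m p = 0 := by
  classical
  obtain ⟨p, rfl⟩ := h
  rw [coeff_X_mul', if_neg (Finsupp.notMem_support_iff.mpr hm)]

theorem isRelPrime_X_of_coeff_ne_zero [CommRing R] [IsDomain R] {i : σ}
    {p : MvPolynomial σ R} {m : σ →₀ ℕ} (hm : m i = 0) (hp : coeff m p ≠ 0) :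
    IsRelPrime (X i) p :=
  X_prime.irreducible.isRelPrime_iff_not_dvd.mpr fun h ↦ hp (coeff_eq_zero_of_X_dvd h hm)

end MvPolynomial

theorem xy_then_ysq_regular_sequence_general (N : ℕ) :
    (∀ p : MvPolynomial (Fin 2) ℚ, (C 2 * X 0 * X 1) * p = 0 → p = 0) ∧
    (∀ q : MvPolynomial (Fin 2) ℚ ⧸ Ideal.span {(C 2 * X 0 * X 1 : MvPolynomial (Fin 2) ℚ)},
      Ideal.Quotient.mk (Ideal.span {(C 2 * X 0 * X 1 : MvPolynomial (Fin 2) ℚ)})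
          (X 1 ^ 2 + C ((2 * N + 1 : ℕ) : ℚ) * X 0 ^ (2 * N)) * q = 0 → q = 0) := by
  set g : MvPolynomial (Fin 2) ℚ := X 1 ^ 2 + C ((2 * N + 1 : ℕ) : ℚ) * X 0 ^ (2 * N)
  have hsingle : Finsupp.single (1 : Fin 2) 2 ≠ Finsupp.single 0 (2 * N) := fun h ↦ by
    simpa using DFunLike.congr_fun h 1
  have hx : IsRelPrime (X 0) g := by
    refine isRelPrime_X_of_coeff_ne_zero (m := Finsupp.single 1 2) (by simp) ?_
    rw [coeff_add, coeff_C_mul, coeff_X_pow, coeff_X_pow, if_pos rfl, if_neg hsingle.symm]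
    norm_num
  have hy : IsRelPrime (X 1) g := by
    refine isRelPrime_X_of_coeff_ne_zero (m := Finsupp.single 0 (2 * N)) (by simp) ?_
    rw [coeff_add, coeff_C_mul, coeff_X_pow, coeff_X_pow, if_pos rfl, if_neg hsingle]
    positivity
  have h2 : IsUnit (C 2 : MvPolynomial (Fin 2) ℚ) := (isUnit_iff_ne_zero.mpr two_ne_zero).map C
  refine ⟨fun p hp ↦ (mul_eq_zero.mp hp).resolve_left ?_, fun q ↦ ?_⟩
  · exact mul_ne_zero (mul_ne_zero h2.ne_zero (X_ne_zero 0)) (X_ne_zero 1)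
  · exact ((isRelPrime_mul_unit_left_left h2).mpr hx).mul_left hy
      |>.eq_zero_of_quotient_mk_mul_eq_zero

/-- `2xy` and `y² + w'(x) = y² + (2N+1)x^{2N}` form a regular sequence in `ℚ[x,y]`:
`2xy` is a nonzerodivisor, and `y² + (2N+1)x^{2N}` is a nonzerodivisor in the
quotient `ℚ[x,y]/(2xy)`. -/
theorem xy_then_ysq_regular_sequence (N : ℕ) (hN : 1 ≤ N) :
    (∀ p : MvPolynomial (Fin 2) ℚ, (C 2 * X 0 * X 1) * p = 0 → p = 0) ∧
    (∀ q : MvPolynomial (Fin 2) ℚ ⧸ Ideal.span {(C 2 * X 0 * X 1 : MvPolynomial (Fin 2) ℚ)},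
      Ideal.Quotient.mk (Ideal.span {(C 2 * X 0 * X 1 : MvPolynomial (Fin 2) ℚ)})
          (X 1 ^ 2 + C ((2 * N + 1 : ℕ) : ℚ) * X 0 ^ (2 * N)) * q = 0 → q = 0) :=
  xy_then_ysq_regular_sequence_general N
end

section
/- With P_par, Q_par, P_vir, Q_vir as above and F₀ = [[0, 1],[q₂² − q₁²C, 0]], F₁ = [[q₂, −q₁],[q₁C, −q₂]], the pair (F₀, F₁) is a morphism of matrix factorizations: F₀ · P_par = P_vir · F₁ and F₁ · Q_par = Q_vir · F₀. -/
open MvPolynomial Matrix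

/-- The proper algebra `R = ℚ[p₁,p₂,q₁,q₂,r₁,r₂,C]`. -/
noncomputable abbrev Rp : Type := MvPolynomial (Fin 7) ℚ

noncomputable def p₁ : Rp := X 0
noncomputable def p₂ : Rp := X 1
noncomputable def q₁ : Rp := X 2
noncomputable def q₂ : Rp := X 3
noncomputable def r₁ : Rp := X 4
noncomputable def r₂ : Rp := X 5
noncomputable def Cv : Rp := X 6

/-- The proper polynomial `W = p₁q₂r₂ + q₁p₂r₂ + r₁p₂q₂ + p₁q₁r₁C`. -/
noncomputable def Wp : Rp := p₁ * q₂ * r₂ + q₁ * p₂ * r₂ + r₁ * p₂ * q₂ + p₁ * q₁ * r₁ * Cv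

noncomputable def Ppar : Matrix (Fin 2) (Fin 2) Rp :=
  !![p₂, p₁; q₂ * r₂ + q₁ * r₁ * Cv, -(q₂ * r₁ + q₁ * r₂)]
noncomputable def Qpar : Matrix (Fin 2) (Fin 2) Rp :=
  !![q₁ * r₂ + q₂ * r₁, p₁; q₂ * r₂ + q₁ * r₁ * Cv, -p₂]

noncomputable def Pvir : Matrix (Fin 2) (Fin 2) Rp :=
  !![r₂, r₁; p₂ * q₂ + p₁ * q₁ * Cv, -(p₁ * q₂ + p₂ * q₁)]
noncomputable def Qvir : Matrix (Fin 2) (Fin 2) Rp :=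
  !![p₁ * q₂ + p₂ * q₁, r₁; p₂ * q₂ + p₁ * q₁ * Cv, -r₂]

noncomputable def Phor : Matrix (Fin 2) (Fin 2) Rp :=
  !![q₂, q₁; p₂ * r₂ + p₁ * r₁ * Cv, -(p₁ * r₂ + p₂ * r₁)]
noncomputable def Qhor : Matrix (Fin 2) (Fin 2) Rp :=
  !![p₁ * r₂ + p₂ * r₁, q₁; p₂ * r₂ + p₁ * r₁ * Cv, -q₂]

noncomputable def F₀ : Matrix (Fin 2) (Fin 2) Rp :=
  !![0, 1; q₂ ^ 2 - q₁ ^ 2 * Cv, 0]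
noncomputable def F₁ : Matrix (Fin 2) (Fin 2) Rp :=
  !![q₂, -q₁; q₁ * Cv, -q₂]

noncomputable def G₀ : Matrix (Fin 2) (Fin 2) Rp :=
  !![0, 1; p₂ ^ 2 - p₁ ^ 2 * Cv, 0]
noncomputable def G₁ : Matrix (Fin 2) (Fin 2) Rp :=
  !![p₂, -p₁; p₁ * Cv, -p₂]

noncomputable def X₀ : Matrix (Fin 2) (Fin 2) Rp :=
  !![-q₂, 0; q₁ * Cv, 0]
noncomputable def X₁ : Matrix (Fin 2) (Fin 2) Rp :=
  !![0, 0; p₁ * Cv, p₂]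

/-- The pair `(F₀, F₁)` is a morphism of matrix factorizations from
`(P_par, Q_par)` to `(P_vir, Q_vir)`: `F₀ P_par = P_vir F₁` and `F₁ Q_par = Q_vir F₀`. -/
theorem saddle_morphism_commutes :
    F₀ * Ppar = Pvir * F₁ ∧ F₁ * Qpar = Qvir * F₀ := by
  constructor <;>
  · ext i j : 1
    fin_cases i <;> fin_cases j <;>
      · simp only [F₀, F₁, Ppar, Pvir, Qpar, Qvir, Matrix.mul_apply, Fin.sum_univ_two,
          Fin.mk_zero, Fin.mk_one, Fin.isValue, Matrix.cons_val', Matrix.cons_val_zero,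
          Matrix.cons_val_one, Matrix.head_cons, Matrix.head_fin_const, Matrix.empty_val',
          Matrix.cons_val_fin_one, Matrix.of_apply]
        ring
end

section
/- With G₀ = [[0,1],[p₂² − p₁²C, 0]], G₁ = [[p₂, −p₁],[p₁C, −p₂]], F₀ = [[0,1],[q₂² − q₁²C, 0]], F₁ = [[q₂, −q₁],[q₁C, −q₂]], X₀ = [[−q₂, 0],[q₁C, 0]], X₁ = [[0, 0],[p₁C, p₂]], and P_par, Q_par, P_hor, Q_hor as defined, one has the null-homotopy identities G₀F₀ = −(P_hor·X₀ + X₁·Q_par) and G₁F₁ = −(Q_hor·X₁ + X₀·P_par). -/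
open MvPolynomial Matrix

/-- The null-homotopy identities for the composition `G ∘ F` of saddle morphisms:
`G₀ F₀ = −(P_hor X₀ + X₁ Q_par)` and `G₁ F₁ = −(Q_hor X₁ + X₀ P_par)`. -/
theorem saddle_null_homotopy :
    G₀ * F₀ = -(Phor * X₀ + X₁ * Qpar) ∧
    G₁ * F₁ = -(Qhor * X₁ + X₀ * Ppar) := by
  constructor <;>
  · apply Matrix.ext
    intro i j
    fin_cases i <;> fin_cases j <;>
      simp [G₀, F₀, F₁, G₁, Phor, Qhor, X₀, X₁, Qpar, Ppar, Matrix.mul_apply,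
        Fin.sum_univ_two] <;> ring
end
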